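/- (Theorem 1, part 2) For every density matrix ρ on (ℂ^d)^{⊗N} and every spectral decomposition ρ = Σ_k p_k |k⟩⟨k| into an orthonormal eigenbasis, the sum of the quantum Fisher informations over the three directions satisfies Σ_{α∈{x,y,z}} F_Q(ρ, J^α) ≤ 4 N s (N s + 1), where F_Q(ρ, J^α) = 2·Σ_{k,l : p_k + p_l > 0} ((p_k − p_l)²/(p_k + p_l))·|⟨k|J^α|l⟩|². -/

import Mathlib

open Matrix Complex

/-- The spin quantum number `s = (d-1)/2` for local dimension `d`. -/
noncomputable def sval (d : ℕ) : ℝ := ((d : ℝ) - 1) / 2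

/-- The magnetic quantum number `m = j - s` attached to the `j`-th basis vector,
so that `m` runs over `-s, -s+1, …, s`. -/
noncomputable def mval (d : ℕ) (j : Fin d) : ℝ := (j : ℝ) - sval d

/-- The spin-`s` operator `S^x`:
`⟨m'|S^x|m⟩ = (δ_{m',m+1} + δ_{m'+1,m}) (1/2) √(s(s+1) - m' m)`. -/
noncomputable def Sx (d : ℕ) : Matrix (Fin d) (Fin d) ℂ := fun j' j =>
  ((if (j' : ℕ) = (j : ℕ) + 1 then 1 else 0) + (if (j' : ℕ) + 1 = (j : ℕ) then 1 else 0)) *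
    (1 / 2) * (Real.sqrt (sval d * (sval d + 1) - mval d j' * mval d j) : ℂ)

/-- The spin-`s` operator `S^y`:
`⟨m'|S^y|m⟩ = (δ_{m',m+1} - δ_{m'+1,m}) (1/(2i)) √(s(s+1) - m' m)`. -/
noncomputable def Sy (d : ℕ) : Matrix (Fin d) (Fin d) ℂ := fun j' j =>
  ((if (j' : ℕ) = (j : ℕ) + 1 then 1 else 0) - (if (j' : ℕ) + 1 = (j : ℕ) then 1 else 0)) *
    (1 / (2 * Complex.I)) * (Real.sqrt (sval d * (sval d + 1) - mval d j' * mval d j) : ℂ)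

/-- The spin-`s` operator `S^z`: `⟨m'|S^z|m⟩ = δ_{m',m} m`. -/
noncomputable def Sz (d : ℕ) : Matrix (Fin d) (Fin d) ℂ := fun j' j =>
  if j' = j then (mval d j : ℂ) else 0

/-- The three spin-`s` matrices `S^x, S^y, S^z`, indexed by `α : Fin 3`. -/
noncomputable def spin (d : ℕ) : Fin 3 → Matrix (Fin d) (Fin d) ℂ := ![Sx d, Sy d, Sz d]

/-- The single-site operator `A_i` acting as `A` on the `i`-th tensor factor of `(ℂ^d)^{⊗N}`
and as the identity on all other factors. -/
noncomputable def siteOp (d N : ℕ) (A : Matrix (Fin d) (Fin d) ℂ) (i : Fin N) :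
    Matrix (Fin N → Fin d) (Fin N → Fin d) ℂ := fun f g =>
  A (f i) (g i) * ∏ j ∈ Finset.univ.erase i, (if f j = g j then 1 else 0)

/-- The collective spin operator `J = Σ_{i=1}^N A_i` on `(ℂ^d)^{⊗N}`. -/
noncomputable def collOp (d N : ℕ) (A : Matrix (Fin d) (Fin d) ℂ) :
    Matrix (Fin N → Fin d) (Fin N → Fin d) ℂ := ∑ i : Fin N, siteOp d N A i

/-- The quantum Fisher information of a state with spectral data `(p, v)` (eigenvalues `p k`
and orthonormal eigenvectors `v k`) with respect to a generator `G`: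
`F_Q = 2 Σ_{k,l : p_k+p_l>0} ((p_k-p_l)²/(p_k+p_l)) |⟨k|G|l⟩|²`. -/
noncomputable def qfi {ι : Type*} [Fintype ι] (p : ι → ℝ) (v : ι → (ι → ℂ))
    (G : Matrix ι ι ℂ) : ℝ :=
  2 * ∑ k : ι, ∑ l : ι,
    if 0 < p k + p l then
      ((p k - p l) ^ 2 / (p k + p l)) * ‖star (v k) ⬝ᵥ G.mulVec (v l)‖ ^ 2
    else 0

/-!
The weight `(p_k - p_l)² / (p_k + p_l)` is at most `p_k + p_l`; since `|⟨k|G|l⟩|²` is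
symmetric in `k, l` and `Σ_l |⟨k|G|l⟩|² = ⟨k|G²|k⟩` for an orthonormal basis,
`F_Q(ρ, G) ≤ 4 Σ_k p_k ⟨k|G²|k⟩`.
Summed over the three directions, `G²` becomes the Casimir `J² = J₋J₊ + J_z + J_z²`. The raising
operator `J₊` raises the total index `Σ_i j_i`, so it is nilpotent, and it commutes with `J²`;
hence every eigenspace of `J²` contains a nonzero vector killed by `J₊`, on which `J²` acts as the
diagonal `J_z + J_z²` with `|J_z| ≤ Ns`. So all eigenvalues of `J²` are at most `Ns(Ns+1)`.
-/

noncomputable def Splus (d : ℕ) : Matrix (Fin d) (Fin d) ℂ := fun j' j =>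
  if (j' : ℕ) = (j : ℕ) + 1 then (Real.sqrt (sval d * (sval d + 1) - mval d j' * mval d j) : ℂ)
  else 0

section SingleSite

variable {d : ℕ}

lemma mval_mem_Icc (j : Fin d) : mval d j ∈ Set.Icc (-sval d) (sval d) := by
  have : ((j : ℕ) : ℝ) + 1 ≤ d := by exact_mod_cast j.isLt
  constructor <;> simp only [mval, sval] <;> linarith [(j : ℕ).cast_nonneg (α := ℝ)]

lemma mval_of_val_eq_succ {j k : Fin d} (h : (j : ℕ) = k + 1) : mval d j = mval d k + 1 := by
  simp only [mval, h]; push_cast; ring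

lemma mval_eq_neg_sval {j : Fin d} (h : (j : ℕ) = 0) : mval d j = -sval d := by
  simp [mval, h]

lemma mval_eq_sval {j : Fin d} (h : (j : ℕ) + 1 = d) : mval d j = sval d := by
  simp only [mval, sval, ← h]; push_cast; ring

lemma sum_ite_val_eq_succ {M : Type*} [AddCommMonoid M] (j : Fin d) (c : M) :
    ∑ k : Fin d, (if (j : ℕ) = k + 1 then c else 0) = if 0 < (j : ℕ) then c else 0 := by
  split_ifs with hj
  · rw [Finset.sum_eq_single ⟨j - 1, by omega⟩
      (fun k _ hk => if_neg fun h => hk (Fin.ext (by simp; omega))) (by simp),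
      if_pos (by simp; omega)]
  · exact Finset.sum_eq_zero fun k _ => if_neg (by omega)

lemma sum_ite_eq_val_succ {M : Type*} [AddCommMonoid M] (j : Fin d) (c : M) :
    ∑ k : Fin d, (if (k : ℕ) = j + 1 then c else 0) = if (j : ℕ) + 1 < d then c else 0 := by
  split_ifs with hj
  · rw [Finset.sum_eq_single ⟨j + 1, hj⟩
      (fun k _ hk => if_neg fun h => hk (Fin.ext (by simp; omega))) (by simp), if_pos rfl]
  · exact Finset.sum_eq_zero fun k _ => if_neg (by omega)

lemma mul_self_sqrt_raising_coeff {j k : Fin d} (h : (j : ℕ) = k + 1) :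
    (Real.sqrt (sval d * (sval d + 1) - mval d j * mval d k) : ℂ) *
      (Real.sqrt (sval d * (sval d + 1) - mval d j * mval d k) : ℂ)
      = ((sval d * (sval d + 1) - mval d j * (mval d j - 1) : ℝ) : ℂ) := by
  have hjk := mval_of_val_eq_succ h
  obtain ⟨-, hj⟩ := mval_mem_Icc j
  obtain ⟨hk, -⟩ := mval_mem_Icc k
  rw [← Complex.ofReal_mul, Real.mul_self_sqrt (by nlinarith), hjk]
  congr 1; ring

lemma Splus_mul_star_Splus (a b k : Fin d) :
    Splus d a k * star (Splus d b k) = if (a : ℕ) = k + 1 ∧ (b : ℕ) = k + 1 then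
      ((sval d * (sval d + 1) - mval d a * (mval d a - 1) : ℝ) : ℂ) else 0 := by
  by_cases ha : (a : ℕ) = k + 1
  · by_cases hb : (b : ℕ) = k + 1
    · obtain rfl : a = b := Fin.ext (by omega)
      rw [if_pos ⟨ha, ha⟩, ← mul_self_sqrt_raising_coeff ha, Splus, if_pos ha, Complex.star_def,
        Complex.conj_ofReal]
    · simp [Splus, hb]
  · simp [Splus, ha]

lemma star_Splus_mul_Splus (a b k : Fin d) :
    star (Splus d k a) * Splus d k b = if (k : ℕ) = a + 1 ∧ (k : ℕ) = b + 1 then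
      ((sval d * (sval d + 1) - mval d a * (mval d a + 1) : ℝ) : ℂ) else 0 := by
  by_cases ha : (k : ℕ) = a + 1
  · by_cases hb : (k : ℕ) = b + 1
    · obtain rfl : a = b := Fin.ext (by omega)
      rw [if_pos ⟨ha, ha⟩, Splus, if_pos ha, Complex.star_def, Complex.conj_ofReal,
        mul_self_sqrt_raising_coeff ha, mval_of_val_eq_succ ha]
      push_cast; ring
    · simp [Splus, hb]
  · simp [Splus, ha]

lemma Splus_mul_conjTranspose :
    Splus d * (Splus d)ᴴ = diagonal fun a =>
      ((sval d * (sval d + 1) - mval d a * (mval d a - 1) : ℝ) : ℂ) := by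
  ext a b
  simp only [mul_apply, conjTranspose_apply, Splus_mul_star_Splus, diagonal_apply]
  split_ifs with hab
  · subst hab
    simp only [and_self, sum_ite_val_eq_succ, ite_eq_left_iff, not_lt, nonpos_iff_eq_zero]
    -- the closed form also covers the bottom state, where `s(s+1) - m(m-1)` vanishes
    intro ha
    rw [mval_eq_neg_sval ha]; push_cast; ring
  · exact Finset.sum_eq_zero fun k _ => if_neg fun h => hab (Fin.ext (by omega))

lemma conjTranspose_mul_Splus :
    (Splus d)ᴴ * Splus d = diagonal fun a =>
      ((sval d * (sval d + 1) - mval d a * (mval d a + 1) : ℝ) : ℂ) := by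
  ext a b
  simp only [mul_apply, conjTranspose_apply, star_Splus_mul_Splus, diagonal_apply]
  split_ifs with hab
  · subst hab
    simp only [and_self, sum_ite_eq_val_succ, ite_eq_left_iff, not_lt]
    intro ha
    rw [mval_eq_sval (by omega : (a : ℕ) + 1 = d)]; push_cast; ring
  · exact Finset.sum_eq_zero fun k _ => if_neg fun h => hab (Fin.ext (by omega))

lemma Sz_eq_diagonal : Sz d = diagonal fun j => (mval d j : ℂ) := by
  ext j' j
  by_cases h : j' = j <;> simp [Sz, h]

lemma Splus_commutator : Splus d * (Splus d)ᴴ - (Splus d)ᴴ * Splus d = (2 : ℂ) • Sz d := by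
  rw [Splus_mul_conjTranspose, conjTranspose_mul_Splus, Sz_eq_diagonal, diagonal_sub,
    ← diagonal_smul]
  congr 1; funext a; simp; ring

lemma Splus_apply_eq_zero_of_le {a b : Fin d} (h : a ≤ b) : Splus d a b = 0 :=
  if_neg (by rw [Fin.le_def] at h; omega)

lemma Sz_commutator_Splus : Sz d * Splus d - Splus d * Sz d = Splus d := by
  ext j' j
  by_cases h : (j' : ℕ) = j + 1
  · simp [Sz_eq_diagonal, Splus, h, mval_of_val_eq_succ h]; ring
  · simp [Sz_eq_diagonal, Splus, h]

lemma Sx_eq : Sx d = (1 / 2 : ℂ) • (Splus d + (Splus d)ᴴ) := by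
  ext j' j
  simp only [Sx, Splus, Matrix.smul_apply, Matrix.add_apply, conjTranspose_apply, smul_eq_mul]
  by_cases h : (j' : ℕ) = j + 1
  · rw [if_pos h, if_neg (by omega), if_pos h, if_neg (by omega)]
    simp
  · by_cases h' : (j' : ℕ) + 1 = j
    · rw [if_neg h, if_pos h', if_neg h, if_pos h'.symm, mul_comm (mval d j)]
      simp
    · rw [if_neg h, if_neg h', if_neg h, if_neg (Ne.symm h')]
      simp

lemma Sy_eq : Sy d = (I / 2) • ((Splus d)ᴴ - Splus d) := by
  ext j' j
  have hI : (1 : ℂ) / (2 * I) = -I / 2 := by field_simp; simp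
  simp only [Sy, Splus, Matrix.smul_apply, Matrix.sub_apply, conjTranspose_apply, smul_eq_mul, hI]
  by_cases h : (j' : ℕ) = j + 1
  · rw [if_pos h, if_neg (by omega), if_pos h, if_neg (by omega)]
    simp; ring
  · by_cases h' : (j' : ℕ) + 1 = j
    · rw [if_neg h, if_pos h', if_neg h, if_pos h'.symm, mul_comm (mval d j)]
      simp; ring
    · rw [if_neg h, if_neg h', if_neg h, if_neg (Ne.symm h')]
      simp

lemma spin_isHermitian (α : Fin 3) : (spin d α).IsHermitian := by
  fin_cases α
  · change (Sx d)ᴴ = Sx d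
    rw [Sx_eq, conjTranspose_smul, conjTranspose_add, conjTranspose_conjTranspose, add_comm]
    simp
  · change (Sy d)ᴴ = Sy d
    rw [Sy_eq, conjTranspose_smul, conjTranspose_sub, conjTranspose_conjTranspose,
      ← neg_sub, smul_neg, ← neg_smul]
    simp [neg_div]
  · change (Sz d)ᴴ = Sz d
    rw [Sz_eq_diagonal, diagonal_conjTranspose]
    simp

end SingleSite

open Function

section Collective

variable {d N : ℕ}

lemma siteOp_apply (A : Matrix (Fin d) (Fin d) ℂ) (i : Fin N) (f g : Fin N → Fin d) :
    siteOp d N A i f g = if ∀ j ≠ i, f j = g j then A (f i) (g i) else 0 := by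
  simp [siteOp, Finset.prod_boole]

lemma siteOp_mulVec (A : Matrix (Fin d) (Fin d) ℂ) (i : Fin N) (ψ : (Fin N → Fin d) → ℂ) :
    siteOp d N A i *ᵥ ψ = fun f => ∑ x, A (f i) x * ψ (update f i x) := by
  funext f
  have hg : ∀ g : Fin N → Fin d, siteOp d N A i f g * ψ g =
      ∑ x, if update f i x = g then A (f i) (g i) * ψ g else 0 := by
    intro g
    simp only [siteOp_apply, update_eq_iff, ite_and, Finset.sum_ite_eq', Finset.mem_univ,
      if_true, ite_mul, zero_mul]
  simp only [mulVec, dotProduct, hg]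
  rw [Finset.sum_comm]
  simp

lemma collOp_mulVec (A : Matrix (Fin d) (Fin d) ℂ) (ψ : (Fin N → Fin d) → ℂ) :
    collOp d N A *ᵥ ψ = fun f => ∑ i, ∑ x, A (f i) x * ψ (update f i x) := by
  funext f
  simp only [collOp, sum_mulVec, Finset.sum_apply, siteOp_mulVec]

lemma siteOp_mul_siteOp_self (A B : Matrix (Fin d) (Fin d) ℂ) (i : Fin N) :
    siteOp d N A i * siteOp d N B i = siteOp d N (A * B) i := by
  refine ext_iff_mulVec.2 fun ψ => ?_
  funext f
  simp only [← mulVec_mulVec, siteOp_mulVec, update_self, update_idem, mul_apply, Finset.mul_sum,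
    Finset.sum_mul, mul_assoc]
  exact Finset.sum_comm

lemma siteOp_commute (A B : Matrix (Fin d) (Fin d) ℂ) {i j : Fin N} (hij : i ≠ j) :
    Commute (siteOp d N A i) (siteOp d N B j) := by
  refine ext_iff_mulVec.2 fun ψ => ?_
  funext f
  simp only [← mulVec_mulVec, siteOp_mulVec, update_of_ne hij, update_of_ne hij.symm,
    update_comm hij, Finset.mul_sum]
  rw [Finset.sum_comm]
  simp only [mul_left_comm]

lemma siteOp_add (A B : Matrix (Fin d) (Fin d) ℂ) (i : Fin N) :
    siteOp d N (A + B) i = siteOp d N A i + siteOp d N B i := by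
  ext f g; simp only [siteOp, Matrix.add_apply, add_mul]

lemma siteOp_sub (A B : Matrix (Fin d) (Fin d) ℂ) (i : Fin N) :
    siteOp d N (A - B) i = siteOp d N A i - siteOp d N B i := by
  ext f g; simp only [siteOp, Matrix.sub_apply, sub_mul]

lemma siteOp_smul (c : ℂ) (A : Matrix (Fin d) (Fin d) ℂ) (i : Fin N) :
    siteOp d N (c • A) i = c • siteOp d N A i := by
  ext f g; simp only [siteOp, Matrix.smul_apply, smul_eq_mul, mul_assoc]

lemma siteOp_conjTranspose (A : Matrix (Fin d) (Fin d) ℂ) (i : Fin N) :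
    (siteOp d N A i)ᴴ = siteOp d N Aᴴ i := by
  ext f g
  simp only [conjTranspose_apply, siteOp_apply, eq_comm (a := g _)]
  split_ifs <;> simp

lemma collOp_add (A B : Matrix (Fin d) (Fin d) ℂ) :
    collOp d N (A + B) = collOp d N A + collOp d N B := by
  simp only [collOp, siteOp_add, Finset.sum_add_distrib]

lemma collOp_smul (c : ℂ) (A : Matrix (Fin d) (Fin d) ℂ) :
    collOp d N (c • A) = c • collOp d N A := by
  simp only [collOp, siteOp_smul, Finset.smul_sum]

lemma collOp_sub (A B : Matrix (Fin d) (Fin d) ℂ) :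
    collOp d N (A - B) = collOp d N A - collOp d N B := by
  simp only [collOp, siteOp_sub, Finset.sum_sub_distrib]

lemma collOp_conjTranspose (A : Matrix (Fin d) (Fin d) ℂ) :
    (collOp d N A)ᴴ = collOp d N Aᴴ := by
  simp only [collOp, conjTranspose_sum, siteOp_conjTranspose]

lemma Matrix.IsHermitian.collOp {A : Matrix (Fin d) (Fin d) ℂ} (hA : A.IsHermitian) :
    (collOp d N A).IsHermitian := by
  rw [IsHermitian, collOp_conjTranspose, hA.eq]

lemma collOp_commutator (A B : Matrix (Fin d) (Fin d) ℂ) :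
    collOp d N A * collOp d N B - collOp d N B * collOp d N A = collOp d N (A * B - B * A) := by
  simp only [collOp, Finset.sum_mul_sum]
  rw [Finset.sum_comm (f := fun i j => siteOp d N B i * siteOp d N A j), ← Finset.sum_sub_distrib]
  refine Finset.sum_congr rfl fun i _ => ?_
  rw [← Finset.sum_sub_distrib, Finset.sum_eq_single i
    (fun j _ hji => sub_eq_zero.2 (siteOp_commute A B (Ne.symm hji)).eq) (by simp),
    siteOp_mul_siteOp_self, siteOp_mul_siteOp_self, siteOp_sub]

lemma collOp_Sz :
    collOp d N (Sz d) = diagonal fun f => ((∑ i, mval d (f i) : ℝ) : ℂ) := by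
  refine ext_iff_mulVec.2 fun ψ => ?_
  funext f
  simp only [collOp_mulVec, mulVec_diagonal, Sz, ite_mul, zero_mul, Finset.sum_ite_eq,
    Finset.mem_univ, if_true, update_eq_self]
  push_cast
  rw [Finset.sum_mul]

lemma isNilpotent_collOp_of_strictLower {A : Matrix (Fin d) (Fin d) ℂ}
    (hA : ∀ a b, a ≤ b → A a b = 0) : IsNilpotent (collOp d N A) := by
  let deg : (Fin N → Fin d) → ℕ := fun f => ∑ i, (f i : ℕ)
  have hdeg : ∀ f i x, x < f i → deg (update f i x) < deg f := fun f i x hx =>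
    Finset.sum_lt_sum (fun j _ => by rcases eq_or_ne j i with rfl | h <;> simp [*, hx.le])
      ⟨i, Finset.mem_univ _, by simpa⟩
  have hlow : ∀ n ψ f, deg f < n → (collOp d N A ^ n *ᵥ ψ) f = 0 := by
    intro n
    induction n with
    | zero => intro ψ f h; omega
    | succ n ih =>
      intro ψ f hf
      rw [pow_succ', ← mulVec_mulVec, collOp_mulVec]
      refine Finset.sum_eq_zero fun i _ => Finset.sum_eq_zero fun x _ => ?_
      rcases le_or_gt (f i) x with h | h
      · rw [hA _ _ h, zero_mul]
      · rw [ih ψ _ (by have := hdeg f i x h; omega), mul_zero]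
  refine ⟨N * d + 1, ext_iff_mulVec.2 fun ψ => funext fun f => ?_⟩
  rw [hlow _ ψ f, zero_mulVec, Pi.zero_apply]
  have : deg f ≤ N * d := by
    simpa using Finset.sum_le_sum fun i (_ : i ∈ Finset.univ) => (f i).isLt.le
  omega

lemma abs_sum_mval_le (f : Fin N → Fin d) : |∑ i, mval d (f i)| ≤ N * sval d :=
  (Finset.abs_sum_le_sum_abs _ _).trans <| by
    simpa using Finset.sum_le_sum fun i (_ : i ∈ Finset.univ) => abs_le.2 (mval_mem_Icc (f i))

end Collective

lemma exists_eigenvector_mulVec_eq_zero_of_commute {n R : Type*} [Fintype n] [DecidableEq n]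
    [CommRing R] {A X : Matrix n n R} (hX : IsNilpotent X) (hAX : Commute A X) {c : R} {ψ : n → R}
    (hψ : ψ ≠ 0) (hAψ : A *ᵥ ψ = c • ψ) :
    ∃ φ, φ ≠ 0 ∧ A *ᵥ φ = c • φ ∧ X *ᵥ φ = 0 := by
  classical
  have hex : ∃ k, X ^ k *ᵥ ψ = 0 := hX.imp fun k hk => by rw [hk, zero_mulVec]
  obtain ⟨k, hk⟩ : ∃ k, Nat.find hex = k + 1 :=
    Nat.exists_eq_succ_of_ne_zero fun h => hψ (by simpa [h] using Nat.find_spec hex)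
  refine ⟨X ^ k *ᵥ ψ, Nat.find_min hex (by omega), ?_, ?_⟩
  · rw [mulVec_mulVec, (hAX.pow_right k).eq, ← mulVec_mulVec, hAψ, mulVec_smul]
  · rw [mulVec_mulVec, ← pow_succ', ← hk]
    exact Nat.find_spec hex

section Rayleigh

open scoped ComplexOrder

variable {n : Type*} [Fintype n] [DecidableEq n]

lemma re_dotProduct_mulVec_le_of_eigenvalue_le {A : Matrix n n ℂ} (hA : A.IsHermitian) {C : ℝ}
    (hC : ∀ (μ : ℝ) (ψ : n → ℂ), ψ ≠ 0 → A *ᵥ ψ = (μ : ℂ) • ψ → μ ≤ C) (x : n → ℂ) :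
    (star x ⬝ᵥ A *ᵥ x).re ≤ C * (star x ⬝ᵥ x).re := by
  have hB : ((C : ℂ) • 1 - A).IsHermitian :=
    (isHermitian_one.smul (Complex.conj_ofReal C)).sub hA
  have hpsd : ((C : ℂ) • 1 - A).PosSemidef := by
    refine hB.posSemidef_iff_eigenvalues_nonneg.2 fun i => ?_
    have hv := hB.mulVec_eigenvectorBasis i
    rw [sub_mulVec, smul_mulVec, one_mulVec] at hv
    have hAe : A *ᵥ ⇑(hB.eigenvectorBasis i)
        = ((C - hB.eigenvalues i : ℝ) : ℂ) • ⇑(hB.eigenvectorBasis i) := by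
      rw [Complex.ofReal_sub, sub_smul, Complex.coe_smul (hB.eigenvalues i), ← hv, sub_sub_cancel]
    have he : ⇑(hB.eigenvectorBasis i) ≠ (0 : n → ℂ) := fun h =>
      hB.eigenvectorBasis.toBasis.ne_zero i (by simpa using congrArg (WithLp.toLp 2) h)
    linarith [hC _ _ he hAe, show (0 : n → ℝ) i = 0 from rfl]
  have := hpsd.re_dotProduct_nonneg x
  simp only [sub_mulVec, smul_mulVec, one_mulVec, dotProduct_sub, dotProduct_smul] at this
  simpa [mul_comm] using this

end Rayleigh

noncomputable def totalSpinSq (d N : ℕ) : Matrix (Fin N → Fin d) (Fin N → Fin d) ℂ :=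
  ∑ α : Fin 3, collOp d N (spin d α) ^ 2

section TotalSpin

variable (d N : ℕ)

local notation "J₊" => collOp d N (Splus d)
local notation "Jz" => collOp d N (Sz d)

lemma collOp_Sz_commutator_Splus : Jz * J₊ - J₊ * Jz = J₊ := by
  rw [collOp_commutator, Sz_commutator_Splus]

lemma collOp_Splus_commutator : J₊ * J₊ᴴ - J₊ᴴ * J₊ = (2 : ℂ) • Jz := by
  rw [collOp_conjTranspose, collOp_commutator, Splus_commutator, collOp_smul]

lemma totalSpinSq_eq : totalSpinSq d N = J₊ᴴ * J₊ + Jz + Jz ^ 2 := by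
  have hx : collOp d N (Sx d) = (1 / 2 : ℂ) • (J₊ + J₊ᴴ) := by
    rw [Sx_eq, collOp_smul, collOp_add, collOp_conjTranspose]
  have hy : collOp d N (Sy d) = (I / 2) • (J₊ᴴ - J₊) := by
    rw [Sy_eq, collOp_smul, collOp_sub, collOp_conjTranspose]
  have hI : (I / 2) ^ 2 = -(1 / 2 : ℂ) ^ 2 := by rw [div_pow, I_sq]; ring
  have h := collOp_Splus_commutator d N
  simp only [totalSpinSq, Fin.sum_univ_three, spin, Matrix.cons_val_zero, Matrix.cons_val_one,
    Matrix.cons_val_two, Matrix.head_cons, Matrix.tail_cons, hx, hy, smul_pow, hI, neg_smul]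
  linear_combination (norm := skip) (1 / 2 : ℂ) • h
  simp only [sq, mul_add, add_mul, mul_sub, sub_mul]
  module

lemma commute_totalSpinSq_collOp_Splus : Commute (totalSpinSq d N) J₊ := by
  have h1 := collOp_Sz_commutator_Splus d N
  have h2 := collOp_Splus_commutator d N
  rw [two_smul] at h2
  rw [Commute, SemiconjBy, totalSpinSq_eq]
  linear_combination (norm := noncomm_ring) h1 * Jz + Jz * h1 - h2 * J₊

lemma totalSpinSq_isHermitian : (totalSpinSq d N).IsHermitian := by
  have h := fun α => (spin_isHermitian (d := d) α).collOp (N := N) |>.pow 2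
  rw [totalSpinSq, Fin.sum_univ_three]
  exact ((h 0).add (h 1)).add (h 2)

lemma eigenvalue_totalSpinSq_le {μ : ℝ} {ψ : (Fin N → Fin d) → ℂ} (hψ : ψ ≠ 0)
    (h : totalSpinSq d N *ᵥ ψ = (μ : ℂ) • ψ) : μ ≤ N * sval d * (N * sval d + 1) := by
  obtain ⟨φ, hφ, hAφ, hJφ⟩ := exists_eigenvector_mulVec_eq_zero_of_commute
    (isNilpotent_collOp_of_strictLower fun _ _ => Splus_apply_eq_zero_of_le)
    (commute_totalSpinSq_collOp_Splus d N) hψ h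
  obtain ⟨f, hf⟩ : ∃ f, φ f ≠ 0 := Function.ne_iff.1 hφ
  set m := ∑ i, mval d (f i)
  have hμ : (μ : ℂ) * φ f = ((m + m ^ 2 : ℝ) : ℂ) * φ f := by
    rw [totalSpinSq_eq, add_mulVec, add_mulVec, ← mulVec_mulVec, hJφ, mulVec_zero, zero_add,
      collOp_Sz, sq, diagonal_mul_diagonal, ← add_mulVec, diagonal_add] at hAφ
    simpa [m, mulVec_diagonal, sq] using (congrFun hAφ f).symm
  have hm := abs_le.1 (abs_sum_mval_le f)
  rw [mul_left_inj' hf, Complex.ofReal_inj] at hμ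
  nlinarith

lemma re_dotProduct_totalSpinSq_le (x : (Fin N → Fin d) → ℂ) :
    (star x ⬝ᵥ totalSpinSq d N *ᵥ x).re ≤ N * sval d * (N * sval d + 1) * (star x ⬝ᵥ x).re :=
  re_dotProduct_mulVec_le_of_eigenvalue_le (totalSpinSq_isHermitian d N)
    (fun _ _ hψ h => eigenvalue_totalSpinSq_le d N hψ h) x

end TotalSpin

section FisherInformation

variable {ι : Type*} [Fintype ι]

lemma sum_fisher_weights_le {p : ι → ℝ} (hp : ∀ k, 0 ≤ p k) {w : ι → ι → ℝ}
    (hw : ∀ k l, 0 ≤ w k l) (hsymm : ∀ k l, w k l = w l k) :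
    ∑ k, ∑ l, (if 0 < p k + p l then (p k - p l) ^ 2 / (p k + p l) * w k l else 0)
      ≤ 2 * ∑ k, p k * ∑ l, w k l := by
  calc _ ≤ ∑ k, ∑ l, (p k + p l) * w k l := by
        gcongr with k _ l _
        split_ifs with h
        · gcongr
          · exact hw k l
          rw [div_le_iff₀ h]
          nlinarith [hp k, hp l]
        · exact mul_nonneg (add_nonneg (hp k) (hp l)) (hw k l)
    _ = ∑ k, ∑ l, p k * w k l + ∑ k, ∑ l, p l * w k l := by
        simp only [add_mul, Finset.sum_add_distrib]
    _ = 2 * ∑ k, p k * ∑ l, w k l := by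
        have hswap : ∑ k, ∑ l, p l * w k l = ∑ k, ∑ l, p k * w k l := by
          rw [Finset.sum_comm]
          exact Fintype.sum_congr _ _ fun k => Fintype.sum_congr _ _ fun l => by rw [hsymm]
        rw [hswap, ← two_mul]
        simp only [Finset.mul_sum]

variable {v : ι → ι → ℂ}

lemma dotProduct_mulVec_eq_conjTranspose_mul_mul_apply (M : Matrix ι ι ℂ) (k l : ι) :
    star (v k) ⬝ᵥ M *ᵥ v l = ((of v)ᵀᴴ * M * (of v)ᵀ) k l := by
  simp only [mul_apply, dotProduct, mulVec, conjTranspose_apply, transpose_apply, of_apply,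
    Pi.star_apply, Finset.mul_sum, Finset.sum_mul, mul_assoc]
  exact Finset.sum_comm

variable [DecidableEq ι]

lemma conjTranspose_mul_self_eq_one_of_orthonormal
    (hv : ∀ k l, star (v k) ⬝ᵥ v l = if k = l then 1 else 0) : (of v)ᵀᴴ * (of v)ᵀ = 1 := by
  ext k l
  rw [one_apply, ← hv]
  simp [mul_apply, dotProduct]

lemma sum_norm_sq_dotProduct_mulVec (hv : ∀ k l, star (v k) ⬝ᵥ v l = if k = l then 1 else 0)
    (G : Matrix ι ι ℂ) (k : ι) :
    ∑ l, ‖star (v k) ⬝ᵥ G *ᵥ v l‖ ^ 2 = (star (v k) ⬝ᵥ (G * Gᴴ) *ᵥ v k).re := by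
  have hU : (of v)ᵀ * (of v)ᵀᴴ = 1 :=
    mul_eq_one_comm.1 (conjTranspose_mul_self_eq_one_of_orthonormal hv)
  have hB : (of v)ᵀᴴ * (G * Gᴴ) * (of v)ᵀ
      = ((of v)ᵀᴴ * G * (of v)ᵀ) * ((of v)ᵀᴴ * G * (of v)ᵀ)ᴴ := by
    simp only [conjTranspose_mul, conjTranspose_conjTranspose, Matrix.mul_assoc]
    rw [← Matrix.mul_assoc (of v)ᵀ, hU, Matrix.one_mul]
  rw [dotProduct_mulVec_eq_conjTranspose_mul_mul_apply, hB, mul_apply, Complex.re_sum]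
  simp only [dotProduct_mulVec_eq_conjTranspose_mul_mul_apply, conjTranspose_apply,
    Complex.star_def, Complex.mul_conj, Complex.normSq_eq_norm_sq]
  norm_cast

lemma qfi_le_four_mul_sum {p : ι → ℝ} (hp : ∀ k, 0 ≤ p k)
    (hv : ∀ k l, star (v k) ⬝ᵥ v l = if k = l then 1 else 0) {G : Matrix ι ι ℂ}
    (hG : G.IsHermitian) :
    qfi p v G ≤ 4 * ∑ k, p k * (star (v k) ⬝ᵥ (G * G) *ᵥ v k).re := by
  have hsymm : ∀ k l, ‖star (v k) ⬝ᵥ G *ᵥ v l‖ ^ 2 = ‖star (v l) ⬝ᵥ G *ᵥ v k‖ ^ 2 := by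
    intro k l
    rw [dotProduct_mulVec_eq_conjTranspose_mul_mul_apply,
      dotProduct_mulVec_eq_conjTranspose_mul_mul_apply,
      ← (isHermitian_conjTranspose_mul_mul (of v)ᵀ hG).apply]
    simp
  have h := sum_fisher_weights_le hp (fun k l => sq_nonneg ‖star (v k) ⬝ᵥ G *ᵥ v l‖) hsymm
  simp only [sum_norm_sq_dotProduct_mulVec hv, hG.eq] at h
  rw [qfi]
  linarith

end FisherInformation

open scoped ComplexOrder in
theorem qfi_collective_spin_sum_le_general (d N : ℕ)
    (ρ : Matrix (Fin N → Fin d) (Fin N → Fin d) ℂ)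
    (htr : ρ.trace = 1)
    (p : (Fin N → Fin d) → ℝ) (v : (Fin N → Fin d) → ((Fin N → Fin d) → ℂ))
    (hp : ∀ k, 0 ≤ p k)
    (hortho : ∀ k l, star (v k) ⬝ᵥ v l = if k = l then 1 else 0)
    (hdecomp : ρ = ∑ k, (p k : ℂ) • Matrix.vecMulVec (v k) (star (v k))) :
    (∑ α : Fin 3, qfi p v (collOp d N (spin d α)))
      ≤ 4 * (N : ℝ) * sval d * ((N : ℝ) * sval d + 1) := by
  have hnorm : ∀ k, star (v k) ⬝ᵥ v k = 1 := fun k => by simpa using hortho k k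
  have hpsum : ∑ k, p k = 1 := by
    exact_mod_cast (by simpa [hdecomp, trace_sum, dotProduct_comm (v _), hnorm] using htr :
      ∑ k, (p k : ℂ) = 1)
  calc ∑ α : Fin 3, qfi p v (collOp d N (spin d α))
      ≤ ∑ α : Fin 3, 4 * ∑ k, p k *
          (star (v k) ⬝ᵥ (collOp d N (spin d α) * collOp d N (spin d α)) *ᵥ v k).re :=
        Finset.sum_le_sum fun α _ => qfi_le_four_mul_sum hp hortho (spin_isHermitian α).collOp
    _ = 4 * ∑ k, p k * (star (v k) ⬝ᵥ totalSpinSq d N *ᵥ v k).re := by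
        simp only [totalSpinSq, sq, sum_mulVec, dotProduct_sum, Complex.re_sum, Finset.mul_sum]
        exact Finset.sum_comm
    _ ≤ 4 * ∑ k, p k * (N * sval d * (N * sval d + 1)) := by
        gcongr with k
        · exact hp k
        · simpa [hnorm] using re_dotProduct_totalSpinSq_le d N (v k)
    _ = 4 * (N : ℝ) * sval d * ((N : ℝ) * sval d + 1) := by
        rw [← Finset.sum_mul, hpsum]; ring

open scoped ComplexOrder in
/-- (Theorem 1, part 2) For every density matrix `ρ` on `(ℂ^d)^{⊗N}` with spectral
decomposition `ρ = Σ_k p_k |k⟩⟨k|` into an orthonormal eigenbasis, the sum of the quantum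
Fisher informations over the three directions satisfies
`Σ_α F_Q(ρ, J^α) ≤ 4Ns(Ns+1)`. -/
theorem qfi_collective_spin_sum_le (d N : ℕ) (hd : 2 ≤ d) (hN : 1 ≤ N)
    (ρ : Matrix (Fin N → Fin d) (Fin N → Fin d) ℂ)
    (hρ : ρ.PosSemidef) (htr : ρ.trace = 1)
    (p : (Fin N → Fin d) → ℝ) (v : (Fin N → Fin d) → ((Fin N → Fin d) → ℂ))
    (hp : ∀ k, 0 ≤ p k)
    (hortho : ∀ k l, star (v k) ⬝ᵥ v l = if k = l then 1 else 0)
    (hdecomp : ρ = ∑ k, (p k : ℂ) • Matrix.vecMulVec (v k) (star (v k))) :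
    (∑ α : Fin 3, qfi p v (collOp d N (spin d α)))
      ≤ 4 * (N : ℝ) * sval d * ((N : ℝ) * sval d + 1) :=
  qfi_collective_spin_sum_le_general d N ρ htr p v hp hortho hdecomp
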